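/- For all positive integers r and i and every linear order ≪ on the vertices of the rooted tree T^r_i, the First-Fit coloring of T^r_i in order ≪ assigns to the root of T^r_i a color not exceeding i. -/

import Mathlib

noncomputable def ffAux {V : Type*} (G : SimpleGraph V) (ord : V → ℕ) (t : ℕ) (v : V) : ℕ :=
  sInf {i : ℕ | 0 < i ∧ ∀ u, G.Adj u v → ∀ h : ord u < t, ffAux G ord (ord u) u ≠ i}
termination_by t
decreasing_by exact h

/-- The color that First-Fit assigns to vertex `v` when coloring `G` in the
presentation order in which `u` comes before `w` iff `ord u < ord w`. -/
noncomputable def ffColor {V : Type*} (G : SimpleGraph V) (ord : V → ℕ) (v : V) : ℕ :=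
  ffAux G ord (ord v) v

/-- The number of colors used by First-Fit on `G` in the order given by `ord`. -/
noncomputable def ffNumColors {V : Type*} [Fintype V] (G : SimpleGraph V) (ord : V → ℕ) : ℕ :=
  (Finset.univ.image (ffColor G ord)).card

/-- Expected number of colors used by First-Fit on `G` in a uniformly random order. -/
noncomputable def ffExpect {V : Type*} [Fintype V] (G : SimpleGraph V) : ℝ :=
  letI := Classical.decEq V
  (∑ e : V ≃ Fin (Fintype.card V), (ffNumColors G (fun v => (e v : ℕ)) : ℝ)) /
    (Nat.factorial (Fintype.card V) : ℝ)

/-- Expected value of χ_FF(G,≪)/χ(G) over a uniformly random order ≪. -/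
noncomputable def ffRatioExpect {V : Type*} [Fintype V] (G : SimpleGraph V) : ℝ :=
  letI := Classical.decEq V
  (∑ e : V ≃ Fin (Fintype.card V),
      (ffNumColors G (fun v => (e v : ℕ)) : ℝ) / (G.chromaticNumber.toNat : ℝ)) /
    (Nat.factorial (Fintype.card V) : ℝ)

/-- Probability, over a uniformly random presentation order of the vertex set `V`,
of the event `P` (a property of the position function of the order). -/
noncomputable def ffProb {V : Type*} [Fintype V] (P : (V → ℕ) → Prop) : ℝ :=
  letI := Classical.decEq V
  letI := Classical.decPred (fun e : V ≃ Fin (Fintype.card V) => P (fun v => (e v : ℕ)))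
  ((Finset.univ.filter (fun e : V ≃ Fin (Fintype.card V) => P (fun v => (e v : ℕ)))).card : ℝ) /
    (Nat.factorial (Fintype.card V) : ℝ)

/-- `RFF n`: the maximum over all forests on `n` vertices of the expected value of
χ_FF(T,≪)/χ(T) over a uniformly random order ≪. -/
noncomputable def RFF (n : ℕ) : ℝ :=
  sSup {x : ℝ | ∃ G : SimpleGraph (Fin n), G.IsAcyclic ∧ x = ffRatioExpect G}

/-- `l` is a bidirected (simple) path in the orientation of `G` induced by `ord`. -/
def IsBidirected {V : Type*} (G : SimpleGraph V) (ord : V → ℕ) (l : List V) : Prop :=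
  l.Nodup ∧ ∃ (l₁ l₂ : List V) (m : V), l = l₁ ++ m :: l₂ ∧
    List.Chain' (fun a b => G.Adj a b ∧ ord a < ord b) (l₁ ++ [m]) ∧
    List.Chain' (fun a b => G.Adj a b ∧ ord b < ord a) (m :: l₂)

/-- Vertices of the tree `T^r_i`: lists of pairs `(j,q)` with strictly decreasing
positive first coordinates, starting below `i`. -/
def TVert (r i : ℕ) : Type :=
  {l : List (Fin i × Fin r) //
    List.Chain (fun a b => b < a) i (l.map fun p => (p.1 : ℕ)) ∧ ∀ p ∈ l, 1 ≤ (p.1 : ℕ)}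

/-- The root of `T^r_i`. -/
def TRoot (r i : ℕ) : TVert r i := ⟨[], List.IsChain.singleton _, by simp⟩

/-- The tree `T^r_i`: a vertex is adjacent to each of its one-step extensions. -/
def TGraph (r i : ℕ) : SimpleGraph (TVert r i) :=
  SimpleGraph.fromRel (fun u v => ∃ x, v.val = u.val ++ [x])

instance (r i : ℕ) : Finite (TVert r i) := by
  have hinj : Function.Injective
      (fun v : TVert r i => (⟨v.val, by
        have h := v.property.1
        haveI : IsTrans ℕ (fun a b => b < a) := ⟨fun a b c h1 h2 => lt_trans h2 h1⟩
        unfold List.Chain at h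
        rw [List.isChain_iff_pairwise] at h
        have h2 := (List.pairwise_cons.mp h).2
        exact List.Nodup.of_map _ (h2.imp fun hab => (ne_of_lt hab).symm)⟩ :
        {l : List (Fin i × Fin r) // l.Nodup})) :=
    fun a b hab => Subtype.ext (Subtype.mk_eq_mk.mp hab)
  exact Finite.of_injective _ hinj

noncomputable instance (r i : ℕ) : Fintype (TVert r i) := Fintype.ofFinite _


/-! ### Auxiliary development for `tree_root_color_le` -/

lemma ffColor_eq' {V : Type*} (G : SimpleGraph V) (ord : V → ℕ) (v : V) :
    ffColor G ord v =
      sInf {m : ℕ | 0 < m ∧ ∀ u, G.Adj u v → ord u < ord v → ffColor G ord u ≠ m} := by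
  rw [ffColor, ffAux]
  rfl

/-- The "bound" of a vertex of `T^r_i`: the subtree hanging at `v` is a copy of
`T^r_(bnd v)`. -/
def bnd {r i : ℕ} (v : TVert r i) : ℕ := (v.val.map fun p => ((p.1 : ℕ))).getLastD i

lemma getLastD_concat' {α : Type*} (l : List α) (a d : α) : (l ++ [a]).getLastD d = a := by
  induction l generalizing d with
  | nil => rfl
  | cons b l ih => rw [List.cons_append, List.getLastD_cons]; exact ih b

lemma chain_last_lt : ∀ (l : List ℕ) (a j : ℕ),
    List.Chain (fun a b => b < a) j (l ++ [a]) → a < l.getLastD j := by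
  intro l
  induction l with
  | nil =>
    intro a j h
    simpa using (List.chain_cons.mp h).1
  | cons b l ih =>
    intro a j h
    unfold List.Chain at h
    rw [List.cons_append, List.chain_cons] at h
    rw [List.getLastD_cons]
    exact ih a b h.2

lemma one_le_bnd {r i : ℕ} (hi : 1 ≤ i) (v : TVert r i) : 1 ≤ bnd v := by
  rcases List.eq_nil_or_concat v.val with h | ⟨l, x, h⟩
  · simp [bnd, h, hi]
  · have hx : x ∈ v.val := by rw [h]; simp
    have h1 := v.property.2 x hx
    have : bnd v = (x.1 : ℕ) := by
      rw [bnd, h, List.concat_eq_append, List.map_append]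
      exact getLastD_concat' _ _ _
    omega

lemma bnd_child {r i : ℕ} (u v : TVert r i) (x : Fin i × Fin r)
    (h : u.val = v.val ++ [x]) : bnd u < bnd v := by
  have hc := u.property.1
  rw [h, List.map_append] at hc
  have h1 : bnd u = (x.1 : ℕ) := by
    rw [bnd, h, List.map_append]
    exact getLastD_concat' _ _ _
  have h2 := chain_last_lt _ _ _ hc
  rw [h1]
  exact h2

lemma parent_unique {r i : ℕ} {u w v : TVert r i} {x y : Fin i × Fin r}
    (hx : v.val = u.val ++ [x]) (hy : v.val = w.val ++ [y]) : u = w :=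
  Subtype.ext (List.append_inj' (hx.symm.trans hy) rfl).1

lemma tgraph_adj {r i : ℕ} {u v : TVert r i} (h : (TGraph r i).Adj u v) :
    (∃ x, u.val = v.val ++ [x]) ∨ (∃ x, v.val = u.val ++ [x]) := by
  rw [TGraph, SimpleGraph.fromRel_adj] at h
  tauto

lemma ff_key (r i : ℕ) (hi : 1 ≤ i) (ord : TVert r i → ℕ) :
    ∀ k (v : TVert r i), bnd v ≤ k →
      ffColor (TGraph r i) ord v ≤ k + 1 ∧
      ((∀ u : TVert r i, (∃ x, v.val = u.val ++ [x]) → ¬ ord u < ord v) →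
        ffColor (TGraph r i) ord v ≤ k) := by
  intro k
  induction k with
  | zero =>
    intro v hv
    have := one_le_bnd hi v
    omega
  | succ k ih =>
    intro v hv
    have hmem : ∀ m, 0 < m → (∀ u, (TGraph r i).Adj u v → ord u < ord v →
        ffColor (TGraph r i) ord u ≠ m) → ffColor (TGraph r i) ord v ≤ m := by
      intro m hm hall
      rw [ffColor_eq']
      exact Nat.sInf_le ⟨hm, hall⟩
    have hchild : ∀ u : TVert r i, (∃ x, u.val = v.val ++ [x]) → ord u < ord v →
        ffColor (TGraph r i) ord u ≤ k := by
      rintro u ⟨x, hx⟩ hlt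
      have h1 := bnd_child u v x hx
      refine (ih u (by omega)).2 ?_
      rintro w ⟨y, hy⟩ hw
      have hwv : w = v := parent_unique hy hx
      rw [hwv] at hw
      exact lt_asymm hlt hw
    have h2 : (∀ u : TVert r i, (∃ x, v.val = u.val ++ [x]) → ¬ ord u < ord v) →
        ffColor (TGraph r i) ord v ≤ k + 1 := by
      intro hp
      refine hmem (k + 1) (Nat.succ_pos k) ?_
      intro u hu hlt
      rcases tgraph_adj hu with h | h
      · have := hchild u h hlt; omega
      · exact absurd hlt (hp u h)
    refine ⟨?_, h2⟩
    by_cases hp : ∃ p : TVert r i, (∃ x, v.val = p.val ++ [x]) ∧ ord p < ord v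
    · obtain ⟨p, hpv, hplt⟩ := hp
      set c := ffColor (TGraph r i) ord p with hc
      refine le_trans (hmem (if c = k + 1 then k + 2 else k + 1)
        (by split <;> omega) ?_) (by split <;> omega)
      intro u hu hlt
      rcases tgraph_adj hu with h | h
      · have := hchild u h hlt
        split <;> omega
      · obtain ⟨x, hx⟩ := h
        obtain ⟨y, hy⟩ := hpv
        have hup : u = p := parent_unique hx hy
        rw [hup, ← hc]
        split_ifs with hck
        · omega
        · exact hck
    · push_neg at hp
      refine le_trans (h2 ?_) (by omega)
      intro u hu
      exact not_lt.mpr (hp u hu)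

/-- For all positive integers `r`, `i` and every presentation order of `T^r_i` (given by an
injective position function), First-Fit assigns to the root of `T^r_i` a color `≤ i`. -/
theorem tree_root_color_le (r i : ℕ) (hr : 1 ≤ r) (hi : 1 ≤ i)
    (ord : TVert r i → ℕ) (hord : Function.Injective ord) :
    ffColor (TGraph r i) ord (TRoot r i) ≤ i := by
  have hb : bnd (TRoot r i) ≤ i := by simp [bnd, TRoot]
  refine (ff_key r i hi ord i (TRoot r i) hb).2 ?_
  rintro u ⟨x, hx⟩ hlt
  simp [TRoot] at hx
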